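/- arXiv:2603.25098 — 3 statements merged into one kernel-verified Lean document; each statement's English description precedes it below -/
import Mathlib

section
/- Let k = ℝ or ℂ, n ≥ 2, and ε > 0. Let x ∈ k^n be a unit vector with min_{1≤i≤n} |x_i| ≥ 100·ε, let y ∈ k^n be a unit vector with d_ℙ([y], [x]) ≤ ε/2, let 0 < ζ < ε⁴/100, and let g ∈ GL_n(k) be an invertible diagonal matrix. Assume moreover that there is a hyperplane V ⊂ k^n such that g^q·B_ε([x]) ⊆ ℙ(k^n) \ N_ε(ℙ(V)) for every integer q ≠ 0. Then for every integer p ≠ 0 and every nonzero y' ∈ k^n with d_ℙ([y'], [y]) ≤ ζ one has d_ℙ([g^p y'], [g^p y]) ≤ (ζ/ε²) · (ℓ_2(g^p)/ℓ_1(g^p)), where for an invertible diagonal matrix h, ℓ_1(h) ≥ ℓ_2(h) denote the largest and second largest values among the absolute values of the diagonal entries of h (counted with multiplicity). -/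
noncomputable section

/-- Euclidean norm on `Fin n → 𝕜`. -/
def eN {𝕜 : Type*} [RCLike 𝕜] {n : ℕ} (v : Fin n → 𝕜) : ℝ :=
  Real.sqrt (∑ i, ‖v i‖ ^ 2)

/-- Projective distance between (the lines spanned by) two nonzero vectors:
the infimum of `‖ζ·u₀ − v₀‖` over unit representatives `u₀, v₀` and scalars `ζ` of
absolute value one. -/
def dP {𝕜 : Type*} [RCLike 𝕜] {n : ℕ} (u v : Fin n → 𝕜) : ℝ :=
  sInf {r : ℝ | ∃ a b ζ : 𝕜, eN (a • u) = 1 ∧ eN (b • v) = 1 ∧ ‖ζ‖ = 1 ∧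
    r = eN (ζ • a • u - b • v)}

/-- Distance from (the projective point of) a nonzero vector to the projectivization of a
subspace. -/
def distPS {𝕜 : Type*} [RCLike 𝕜] {n : ℕ} (u : Fin n → 𝕜)
    (W : Submodule 𝕜 (Fin n → 𝕜)) : ℝ :=
  sInf {r : ℝ | ∃ w : Fin n → 𝕜, w ∈ W ∧ w ≠ 0 ∧ r = dP u w}

/-!
Every coordinate of `y` is at least `99ε`, since `[y]` is `ε/2`-close to `[x]`. Take unit
representatives `U` of `[y']` and `V` of `[y]` at distance `< 2ζ`, and rescale `V` so that it agrees
with `U` in a coordinate `i` where `|a_i ^ p| = ℓ₁` is maximal. The difference then vanishes in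
coordinate `i`, so `g ^ p` stretches it by at most `ℓ₂`, while `‖g ^ p U‖ ≥ ℓ₁ · 98ε`. Comparing
two vectors through their normalisations costs only a factor `2`.
-/

theorem norm_normalize_sub_normalize_le {E : Type*} [NormedAddCommGroup E] [NormedSpace ℝ E]
    {x : E} (hx : x ≠ 0) (y : E) :
    ‖NormedSpace.normalize x - NormedSpace.normalize y‖ ≤ 2 * ‖x - y‖ / ‖x‖ := by
  have hx' : ‖x‖ ≠ 0 := norm_ne_zero_iff.mpr hx
  have hsplit : NormedSpace.normalize x - NormedSpace.normalize y =
      ‖x‖⁻¹ • ((x - y) + (‖y‖ - ‖x‖) • NormedSpace.normalize y) := by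
    rw [sub_smul, NormedSpace.norm_smul_normalize, smul_add, smul_sub, smul_sub, smul_smul,
      inv_mul_cancel₀ hx', one_smul, NormedSpace.normalize]
    abel
  have hny : ‖NormedSpace.normalize y‖ ≤ 1 := by
    rcases eq_or_ne y 0 with rfl | hy
    · simp
    · exact (NormedSpace.norm_normalize_eq_one_iff.mpr hy).le
  rw [hsplit, norm_smul, norm_inv, norm_norm, inv_mul_eq_div]
  gcongr
  calc ‖x - y + (‖y‖ - ‖x‖) • NormedSpace.normalize y‖
      ≤ ‖x - y‖ + |‖y‖ - ‖x‖| * 1 := by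
        grw [norm_add_le, norm_smul, Real.norm_eq_abs, hny]
    _ ≤ 2 * ‖x - y‖ := by
        rw [mul_one, abs_sub_comm]
        linarith [abs_norm_sub_norm_le x y]

section EuclideanNorm

variable {𝕜 : Type*} [RCLike 𝕜] {n : ℕ}

theorem eN_eq_norm (v : Fin n → 𝕜) : eN v = ‖WithLp.toLp 2 v‖ := by
  rw [EuclideanSpace.norm_eq]; rfl

theorem eN_nonneg (v : Fin n → 𝕜) : 0 ≤ eN v := Real.sqrt_nonneg _

theorem eN_smul (c : 𝕜) (v : Fin n → 𝕜) : eN (c • v) = ‖c‖ * eN v := by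
  rw [eN_eq_norm, eN_eq_norm, WithLp.toLp_smul, norm_smul]

theorem eN_add_le (u v : Fin n → 𝕜) : eN (u + v) ≤ eN u + eN v := by
  simpa only [eN_eq_norm, WithLp.toLp_add] using norm_add_le _ _

theorem toLp_inv_eN_smul (v : Fin n → 𝕜) :
    WithLp.toLp 2 (((eN v : 𝕜))⁻¹ • v) = NormedSpace.normalize (WithLp.toLp 2 v) := by
  rw [NormedSpace.normalize, RCLike.real_smul_eq_coe_smul (K := 𝕜), eN_eq_norm, WithLp.toLp_smul,
    RCLike.ofReal_inv]

theorem eN_inv_eN_smul {v : Fin n → 𝕜} (hv : v ≠ 0) : eN (((eN v : 𝕜))⁻¹ • v) = 1 := by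
  rw [eN_eq_norm, toLp_inv_eN_smul, NormedSpace.norm_normalize_eq_one_iff, Ne, WithLp.toLp_eq_zero]
  exact hv

theorem norm_apply_le_eN (v : Fin n → 𝕜) (i : Fin n) : ‖v i‖ ≤ eN v := by
  simpa only [eN_eq_norm] using PiLp.norm_apply_le (WithLp.toLp 2 v) i

theorem eN_le_mul_of_forall_norm_apply_le {w z : Fin n → 𝕜} {c : ℝ} (hc : 0 ≤ c)
    (h : ∀ j, ‖w j‖ ≤ c * ‖z j‖) : eN w ≤ c * eN z := by
  calc eN w ≤ Real.sqrt (∑ j, c ^ 2 * ‖z j‖ ^ 2) := by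
        refine Real.sqrt_le_sqrt (Finset.sum_le_sum fun j _ => ?_)
        rw [← mul_pow]
        exact pow_le_pow_left₀ (norm_nonneg _) (h j) 2
    _ = c * eN z := by
        rw [← Finset.mul_sum, Real.sqrt_mul (sq_nonneg _), Real.sqrt_sq hc]; rfl

theorem eN_sub_div_smul_le {U V : Fin n → 𝕜} {i : Fin n} (hVi : V i ≠ 0) :
    eN (U - (U i / V i) • V) ≤ eN (U - V) * (1 + eN V / ‖V i‖) := by
  have hsplit : U - (U i / V i) • V = (U - V) + (1 - U i / V i) • V := by
    rw [sub_smul, one_smul]; abel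
  have hcoef : ‖1 - U i / V i‖ ≤ eN (U - V) / ‖V i‖ := by
    rw [one_sub_div hVi, norm_div, norm_sub_rev]
    gcongr
    exact norm_apply_le_eN (U - V) i
  calc eN (U - (U i / V i) • V) ≤ eN (U - V) + ‖1 - U i / V i‖ * eN V := by
        rw [hsplit, ← eN_smul]; exact eN_add_le _ _
    _ ≤ eN (U - V) + eN (U - V) / ‖V i‖ * eN V :=
        add_le_add le_rfl (mul_le_mul_of_nonneg_right hcoef (eN_nonneg V))
    _ = eN (U - V) * (1 + eN V / ‖V i‖) := by ring

end EuclideanNorm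

section ProjectiveDistance

variable {𝕜 : Type*} [RCLike 𝕜] {n : ℕ}

theorem dP_nonneg (u v : Fin n → 𝕜) : 0 ≤ dP u v :=
  Real.sInf_nonneg fun _ ⟨_, _, _, _, _, _, hr⟩ => hr ▸ eN_nonneg _

theorem dP_le_eN_sub {u v : Fin n → 𝕜} {a b z : 𝕜} (ha : eN (a • u) = 1) (hb : eN (b • v) = 1)
    (hz : ‖z‖ = 1) : dP u v ≤ eN (z • a • u - b • v) :=
  csInf_le ⟨0, fun _ ⟨_, _, _, _, _, _, hr⟩ => hr ▸ eN_nonneg _⟩ ⟨a, b, z, ha, hb, hz, rfl⟩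

theorem dP_smul_left {c : 𝕜} (hc : c ≠ 0) (u v : Fin n → 𝕜) : dP (c • u) v = dP u v := by
  unfold dP
  congr 1
  ext r
  constructor
  · rintro ⟨a, b, z, ha, hb, hz, rfl⟩
    exact ⟨a * c, b, z, by rwa [mul_smul], hb, hz, by rw [mul_smul]⟩
  · rintro ⟨a, b, z, ha, hb, hz, rfl⟩
    refine ⟨a / c, b, z, ?_, hb, hz, ?_⟩
    · rwa [smul_smul, div_mul_cancel₀ _ hc]
    · rw [smul_smul (a / c), div_mul_cancel₀ _ hc]

theorem dP_smul_right {c : 𝕜} (hc : c ≠ 0) (u v : Fin n → 𝕜) : dP u (c • v) = dP u v := by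
  unfold dP
  congr 1
  ext r
  constructor
  · rintro ⟨a, b, z, ha, hb, hz, rfl⟩
    exact ⟨a, b * c, z, ha, by rwa [mul_smul], hz, by rw [mul_smul]⟩
  · rintro ⟨a, b, z, ha, hb, hz, rfl⟩
    refine ⟨a, b / c, z, ha, ?_, hz, ?_⟩
    · rwa [smul_smul, div_mul_cancel₀ _ hc]
    · rw [smul_smul (b / c), div_mul_cancel₀ _ hc]

theorem exists_eN_sub_lt_of_dP_lt {u v : Fin n → 𝕜} (hu : u ≠ 0) (hv : v ≠ 0) {r : ℝ}
    (h : dP u v < r) : ∃ a b : 𝕜, eN (a • u) = 1 ∧ eN (b • v) = 1 ∧ eN (a • u - b • v) < r := by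
  have hne : Set.Nonempty {r : ℝ | ∃ a b z : 𝕜, eN (a • u) = 1 ∧ eN (b • v) = 1 ∧ ‖z‖ = 1 ∧
      r = eN (z • a • u - b • v)} :=
    ⟨_, _, _, 1, eN_inv_eN_smul hu, eN_inv_eN_smul hv, norm_one, rfl⟩
  obtain ⟨_, ⟨a, b, z, ha, hb, hz, rfl⟩, hlt⟩ := exists_lt_of_csInf_lt hne h
  refine ⟨z * a, b, ?_, hb, by rwa [mul_smul]⟩
  rw [mul_smul, eN_smul, hz, one_mul, ha]

theorem norm_apply_sub_le_dP {u v : Fin n → 𝕜} (hu : eN u = 1) (hv : eN v = 1) (i : Fin n) :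
    ‖v i‖ - ‖u i‖ ≤ dP u v := by
  refine le_csInf ⟨_, 1, 1, 1, by rwa [one_smul], by rwa [one_smul], norm_one, rfl⟩ ?_
  rintro _ ⟨a, b, z, ha, hb, hz, rfl⟩
  rw [eN_smul, hu, mul_one] at ha
  rw [eN_smul, hv, mul_one] at hb
  calc ‖v i‖ - ‖u i‖ = ‖b * v i‖ - ‖z * (a * u i)‖ := by simp only [norm_mul, ha, hb, hz, one_mul]
    _ ≤ ‖z * (a * u i) - b * v i‖ := by rw [norm_sub_rev]; exact norm_sub_norm_le _ _
    _ ≤ eN (z • a • u - b • v) := norm_apply_le_eN (z • a • u - b • v) i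

theorem dP_le_two_mul_eN_sub_div {u v : Fin n → 𝕜} (hu : u ≠ 0) (hv : v ≠ 0) :
    dP u v ≤ 2 * eN (u - v) / eN u := by
  calc dP u v ≤ eN ((1 : 𝕜) • ((eN u : 𝕜))⁻¹ • u - ((eN v : 𝕜))⁻¹ • v) :=
        dP_le_eN_sub (eN_inv_eN_smul hu) (eN_inv_eN_smul hv) norm_one
    _ = ‖NormedSpace.normalize (WithLp.toLp 2 u) - NormedSpace.normalize (WithLp.toLp 2 v)‖ := by
        rw [one_smul, eN_eq_norm, WithLp.toLp_sub, toLp_inv_eN_smul, toLp_inv_eN_smul]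
    _ ≤ 2 * eN (u - v) / eN u := by
        rw [eN_eq_norm, eN_eq_norm, WithLp.toLp_sub]
        exact norm_normalize_sub_normalize_le (by rwa [Ne, WithLp.toLp_eq_zero]) _

end ProjectiveDistance

section Diagonal

variable {𝕜 : Type*} [RCLike 𝕜] {n : ℕ}

theorem dP_mul_le {d U V : Fin n → 𝕜} {i : Fin n} {ℓ : ℝ} (hℓ : 0 ≤ ℓ)
    (hd : ∀ j ≠ i, ‖d j‖ ≤ ℓ) (hdi : d i ≠ 0) (hUi : U i ≠ 0) (hVi : V i ≠ 0) :
    dP (d * U) (d * V) ≤ 2 * (ℓ * (eN (U - V) * (1 + eN V / ‖V i‖))) / (‖d i‖ * ‖U i‖) := by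
  set c := U i / V i
  have hc : c ≠ 0 := div_ne_zero hUi hVi
  have hdU : d * U ≠ 0 := fun h => mul_ne_zero hdi hUi (congrFun h i)
  have hdV : c • (d * V) ≠ 0 := fun h => smul_ne_zero hc (mul_ne_zero hdi hVi) (congrFun h i)
  have hZ : d * U - c • (d * V) = d * (U - c • V) := by rw [mul_sub, mul_smul_comm]
  have hZi : (U - c • V) i = 0 := by
    rw [Pi.sub_apply, Pi.smul_apply, smul_eq_mul, div_mul_cancel₀ _ hVi, sub_self]
  have hdZ : eN (d * (U - c • V)) ≤ ℓ * eN (U - c • V) := by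
    refine eN_le_mul_of_forall_norm_apply_le hℓ fun j => ?_
    rcases eq_or_ne j i with rfl | hj
    · simp [hZi]
    · rw [Pi.mul_apply, norm_mul]
      exact mul_le_mul_of_nonneg_right (hd j hj) (norm_nonneg _)
  have hdUi : ‖d i‖ * ‖U i‖ ≤ eN (d * U) :=
    (norm_mul (d i) (U i)).symm.trans_le (norm_apply_le_eN (d * U) i)
  have hpos : 0 < ‖d i‖ * ‖U i‖ := mul_pos (norm_pos_iff.mpr hdi) (norm_pos_iff.mpr hUi)
  calc dP (d * U) (d * V) = dP (d * U) (c • (d * V)) := (dP_smul_right hc _ _).symm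
    _ ≤ 2 * eN (d * U - c • (d * V)) / eN (d * U) := dP_le_two_mul_eN_sub_div hdU hdV
    _ ≤ 2 * (ℓ * eN (U - c • V)) / (‖d i‖ * ‖U i‖) := by
        rw [hZ]
        have hnum : 0 ≤ 2 * (ℓ * eN (U - c • V)) :=
          mul_nonneg zero_le_two (mul_nonneg hℓ (eN_nonneg _))
        exact div_le_div₀ hnum (by linarith) hpos hdUi
    _ ≤ 2 * (ℓ * (eN (U - V) * (1 + eN V / ‖V i‖))) / (‖d i‖ * ‖U i‖) := by
        gcongr
        exact eN_sub_div_smul_le hVi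

theorem dP_mul_le_of_dP_lt {d u v : Fin n → 𝕜} {i : Fin n} {ℓ δ m : ℝ} (hℓ : 0 ≤ ℓ)
    (hd : ∀ j ≠ i, ‖d j‖ ≤ ℓ) (hdi : d i ≠ 0) (hu : u ≠ 0) (hv : eN v = 1) (hvi : m ≤ ‖v i‖)
    (huv : dP u v < δ) (hδm : δ < m) :
    dP (d * u) (d * v) ≤ 2 * (ℓ * (δ * (1 + 1 / m))) / (‖d i‖ * (m - δ)) := by
  have hv0 : v ≠ 0 := fun h => by simp [h, eN] at hv
  obtain ⟨a, b, ha, hb, hab⟩ := exists_eN_sub_lt_of_dP_lt hu hv0 huv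
  have ha0 : a ≠ 0 := fun h => by simp [h, eN] at ha
  have hb1 : ‖b‖ = 1 := by rwa [eN_smul, hv, mul_one] at hb
  have hb0 : b ≠ 0 := norm_ne_zero_iff.mp (hb1 ▸ one_ne_zero)
  have hVi : ‖(b • v) i‖ = ‖v i‖ := by rw [Pi.smul_apply, smul_eq_mul, norm_mul, hb1, one_mul]
  have hδ : 0 ≤ δ := (dP_nonneg u v).trans huv.le
  have hUi : m - δ < ‖(a • u) i‖ := by
    have h1 := norm_apply_le_eN (a • u - b • v) i
    have h2 := norm_sub_norm_le ((b • v) i) ((a • u) i)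
    rw [norm_sub_rev, hVi] at h2
    rw [Pi.sub_apply] at h1
    linarith
  calc dP (d * u) (d * v) = dP (d * (a • u)) (d * (b • v)) := by
        rw [mul_smul_comm, mul_smul_comm, dP_smul_left ha0, dP_smul_right hb0]
    _ ≤ 2 * (ℓ * (eN (a • u - b • v) * (1 + eN (b • v) / ‖(b • v) i‖))) /
          (‖d i‖ * ‖(a • u) i‖) :=
        dP_mul_le hℓ hd hdi (norm_pos_iff.mp (by linarith)) (norm_pos_iff.mp (by linarith))
    _ ≤ 2 * (ℓ * (δ * (1 + 1 / m))) / (‖d i‖ * (m - δ)) := by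
        have hm : 0 < m := hδ.trans_lt hδm
        rw [hb, hVi]
        gcongr

end Diagonal

theorem le_iSup_min_of_ne {ι : Type*} [Finite ι] (f : ι → ℝ) {i j : ι} (hij : i ≠ j)
    (h : f j ≤ f i) : f j ≤ ⨆ pr : {pr : ι × ι // pr.1 ≠ pr.2}, min (f pr.1.1) (f pr.1.2) := by
  have := le_ciSup (Finite.bddAbove_range fun pr : {pr : ι × ι // pr.1 ≠ pr.2} =>
    min (f pr.1.1) (f pr.1.2)) ⟨(i, j), hij⟩
  rwa [min_eq_right h] at this

theorem contraction_constant_le {ε ζ ℓ L : ℝ} (hε : 0 < ε) (hε1 : 100 * ε ≤ 1) (hζ0 : 0 < ζ)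
    (hζε : ζ < ε) (hℓ : 0 ≤ ℓ) (hL : 0 < L) :
    2 * (ℓ * (2 * ζ * (1 + 1 / (99 * ε)))) / (L * (99 * ε - 2 * ζ)) ≤ ζ / ε ^ 2 * (ℓ / L) := by
  have hC : 4 * (1 + 1 / (99 * ε)) / (99 * ε - 2 * ζ) ≤ 1 / ε ^ 2 := by
    rw [div_le_div_iff₀ (by linarith) (by positivity)]
    have : 1 / (99 * ε) * ε ^ 2 = ε / 99 := by field_simp
    nlinarith
  calc 2 * (ℓ * (2 * ζ * (1 + 1 / (99 * ε)))) / (L * (99 * ε - 2 * ζ))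
      = ζ * (ℓ / L) * (4 * (1 + 1 / (99 * ε)) / (99 * ε - 2 * ζ)) := by
        field_simp
        ring
    _ ≤ ζ * (ℓ / L) * (1 / ε ^ 2) := by gcongr
    _ = ζ / ε ^ 2 * (ℓ / L) := by ring

theorem stmt10_general {𝕜 : Type*} [RCLike 𝕜] (n : ℕ) (hn : 2 ≤ n) (ε : ℝ) (hε : 0 < ε)
    (x : Fin n → 𝕜) (hx1 : eN x = 1) (hxmin : ∀ i, 100 * ε ≤ ‖x i‖)
    (y : Fin n → 𝕜) (hy1 : eN y = 1) (hyx : dP y x ≤ ε / 2)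
    (ζ : ℝ) (hζ0 : 0 < ζ) (hζ : ζ < ε ^ 4 / 100)
    (a : Fin n → 𝕜) (ha : ∀ i, a i ≠ 0) :
    ∀ p : ℤ, p ≠ 0 → ∀ y' : Fin n → 𝕜, y' ≠ 0 → dP y' y ≤ ζ →
      dP ((Matrix.diagonal fun i => a i ^ p).mulVec y')
          ((Matrix.diagonal fun i => a i ^ p).mulVec y) ≤
        (ζ / ε ^ 2) *
          ((⨆ pr : {pr : Fin n × Fin n // pr.1 ≠ pr.2}, min ‖a (pr : Fin n × Fin n).1 ^ p‖ ‖a (pr : Fin n × Fin n).2 ^ p‖) /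
            (⨆ i, ‖a i ^ p‖)) := by
  intro p _ y' hy' hy'y
  have : Nonempty (Fin n) := ⟨⟨0, by omega⟩⟩
  obtain ⟨i, hi⟩ := Finite.exists_max fun i => ‖a i ^ p‖
  have hdiag (v : Fin n → 𝕜) : (Matrix.diagonal fun i => a i ^ p).mulVec v = a ^ p * v :=
    funext (Matrix.mulVec_diagonal _ v)
  have hε1 : 100 * ε ≤ 1 := (hxmin i).trans (hx1 ▸ norm_apply_le_eN x i)
  have hyi : 99 * ε ≤ ‖y i‖ := by linarith [norm_apply_sub_le_dP hy1 hx1 i, hxmin i]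
  have hζε : ζ < ε := by nlinarith [pow_le_one₀ hε.le (by linarith : ε ≤ 1) (n := 3)]
  have hℓ₂ := Real.iSup_nonneg fun pr : {pr : Fin n × Fin n // pr.1 ≠ pr.2} =>
    le_min (norm_nonneg (a pr.1.1 ^ p)) (norm_nonneg (a pr.1.2 ^ p))
  have hai : a i ^ p ≠ 0 := zpow_ne_zero p (ha i)
  rw [hdiag, hdiag, ciSup_eq_of_forall_le_of_forall_lt_exists_gt hi fun _ h => ⟨i, h⟩]
  exact (dP_mul_le_of_dP_lt (δ := 2 * ζ) hℓ₂
    (fun j hj => le_iSup_min_of_ne (fun i => ‖a i ^ p‖) (Ne.symm hj) (hi j)) hai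
    hy' hy1 hyi (by linarith) (by linarith)).trans
    (contraction_constant_le hε hε1 hζ0 hζε hℓ₂ (norm_pos_iff.mpr hai))

/-- contraction estimate for powers of an invertible diagonal matrix `g`
near a projective point `[y]` close to a point `[x]` with all coordinates bounded below,
assuming all nonzero powers of `g` map `B_ε([x])` off a neighborhood of a hyperplane:
`d_ℙ([g^p y'], [g^p y]) ≤ (ζ/ε²)·(ℓ₂(g^p)/ℓ₁(g^p))`. -/
theorem stmt10 {𝕜 : Type*} [RCLike 𝕜] (n : ℕ) (hn : 2 ≤ n) (ε : ℝ) (hε : 0 < ε)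
    (x : Fin n → 𝕜) (hx1 : eN x = 1) (hxmin : ∀ i, 100 * ε ≤ ‖x i‖)
    (y : Fin n → 𝕜) (hy1 : eN y = 1) (hyx : dP y x ≤ ε / 2)
    (ζ : ℝ) (hζ0 : 0 < ζ) (hζ : ζ < ε ^ 4 / 100)
    (a : Fin n → 𝕜) (ha : ∀ i, a i ≠ 0)
    (hV : ∃ V : Submodule 𝕜 (Fin n → 𝕜), Module.finrank 𝕜 V = n - 1 ∧
      ∀ q : ℤ, q ≠ 0 → ∀ u : Fin n → 𝕜, u ≠ 0 → dP x u ≤ ε →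
        ε ≤ distPS ((Matrix.diagonal fun i => a i ^ q).mulVec u) V) :
    ∀ p : ℤ, p ≠ 0 → ∀ y' : Fin n → 𝕜, y' ≠ 0 → dP y' y ≤ ζ →
      dP ((Matrix.diagonal fun i => a i ^ p).mulVec y')
          ((Matrix.diagonal fun i => a i ^ p).mulVec y) ≤
        (ζ / ε ^ 2) *
          ((⨆ pr : {pr : Fin n × Fin n // pr.1 ≠ pr.2}, min ‖a (pr : Fin n × Fin n).1 ^ p‖ ‖a (pr : Fin n × Fin n).2 ^ p‖) /
            (⨆ i, ‖a i ^ p‖)) :=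
  stmt10_general n hn ε hε x hx1 hxmin y hy1 hyx ζ hζ0 hζ a ha
end
end

section
/- Let k be a nonarchimedean local field, n ≥ 2, and let C = diag(a_1, …, a_n) ∈ GL_n(k) be a diagonal matrix with det C = 1 and a_i ≠ a_j for i ≠ j. Fix ε with 0 < ε < 1 and ε < (1/2)·min_{i≠j} |a_i − a_j|, and set θ(n, ε, C) := min{10⁻²·min_{i≠j} |a_i − a_j|, ε^n · ‖C‖^{1 − 2n² − n}}. Then for every C' ∈ GL_n(k) with ‖C − C'‖ < θ(n, ε, C) there exist w ∈ GL_n(k) and a'_1, …, a'_n ∈ k such that C' = w·diag(a'_1, …, a'_n)·w⁻¹, ‖w − I‖ < ε, ‖w⁻¹ − I‖ < ε, and max_{1≤j≤n} |a'_j − a_j| < ε. -/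
noncomputable section

/-- The sup-of-entries norm of a square matrix over a normed field. -/
def matSup {k : Type*} [NormedField k] {n : ℕ} (A : Matrix (Fin n) (Fin n) k) : ℝ :=
  ⨆ i, ⨆ j, ‖A i j‖

/-!
Write `C' = diag a + E` and look for the conjugator as `w = 1 + u` with `u` vanishing on the
diagonal. The identity `C' (1 + u) = (1 + u) diag a'` forces `a'_j = a_j + (E (1 + u))_jj` and,
off the diagonal, `u_ij = (E (1 + u))_ij / (a'_j - a_i)`. Over an ultrametric field the sup norm
of matrices is submultiplicative and the denominators keep the size `‖a_j - a_i‖ > 2ε`, so the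
right-hand side is a contraction of the ball of radius `‖E‖ / (2ε)`, and Banach's fixed point
theorem produces `u`. The inverse of `1 + u` is a geometric series, and ultrametricity gives
`‖w⁻¹ - 1‖ ≤ ‖u‖`. The smallness of `C' - C` enters as `‖E‖ < θ ≤ ε²`, using `‖C‖ ≥ 1` when
`det C = 1`.
-/

open Matrix Function Set

attribute [local instance] Matrix.normedAddCommGroup

theorem matSup_eq_norm {k : Type*} [NormedField k] {n : ℕ} (A : Matrix (Fin n) (Fin n) k) :
    matSup A = ‖A‖ := by
  have hentry : ∀ i j, ‖A i j‖ ≤ matSup A := fun i j =>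
    (le_ciSup (Finite.bddAbove_range _) j).trans
      (le_ciSup (f := fun i => ⨆ j, ‖A i j‖) (Finite.bddAbove_range _) i)
  have hnonneg : 0 ≤ matSup A := Real.iSup_nonneg fun i => Real.iSup_nonneg fun j => norm_nonneg _
  exact le_antisymm (Real.iSup_le (fun i => Real.iSup_le (fun j =>
    norm_entry_le_entrywise_sup_norm A) (norm_nonneg _)) (norm_nonneg _))
    ((norm_le_iff hnonneg).2 hentry)

theorem Pi.one_le_norm_of_prod_eq_one {k ι : Type*} [NormedField k] [Fintype ι] [Nonempty ι]
    {a : ι → k} (h : ∏ i, a i = 1) : 1 ≤ ‖a‖ := by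
  have : 1 ≤ ‖a‖ ^ Fintype.card ι := calc
    1 = ∏ i, ‖a i‖ := by rw [← norm_prod, h, norm_one]
    _ ≤ ∏ _i : ι, ‖a‖ :=
      Finset.prod_le_prod (fun _ _ => norm_nonneg _) fun i _ => norm_le_pi_norm a i
    _ = ‖a‖ ^ Fintype.card ι := by rw [Finset.prod_const, Finset.card_univ]
  exact (one_le_pow_iff_of_nonneg (norm_nonneg _) Fintype.card_ne_zero).1 this

theorem IsUltrametricDist.norm_units_inv_sub_one_le {R : Type*} [NormedRing R]
    [IsUltrametricDist R] (w : Rˣ) (hw : ‖(w : R) - 1‖ < 1) :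
    ‖((w⁻¹ : Rˣ) : R) - 1‖ ≤ ‖(w : R) - 1‖ := by
  rw [norm_sub_rev (w : R)] at hw ⊢
  set x := ((w⁻¹ : Rˣ) : R) - 1
  set y := 1 - (w : R)
  have hx : x = y + x * y := by
    simp only [x, y, sub_mul, mul_sub, one_mul, mul_one, Units.inv_mul]; abel
  have hle : ‖x‖ ≤ max ‖y‖ ‖x * y‖ := calc
    ‖x‖ = ‖y + x * y‖ := congrArg norm hx
    _ ≤ _ := IsUltrametricDist.norm_add_le_max _ _
  rcases le_max_iff.1 hle with h | h
  · exact h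
  · nlinarith [norm_nonneg x, norm_nonneg y, norm_mul_le x y]

theorem IsUltrametricDist.norm_div_sub_div_le_max {k : Type*} [NormedField k]
    [IsUltrametricDist k] {x₁ x₂ y₁ y₂ : k} (hy₁ : y₁ ≠ 0) (hy₂ : y₂ ≠ 0) :
    ‖x₁ / y₁ - x₂ / y₂‖ ≤ max (‖x₁ - x₂‖ / ‖y₁‖) (‖x₂‖ * ‖y₂ - y₁‖ / (‖y₁‖ * ‖y₂‖)) := by
  have h : x₁ / y₁ - x₂ / y₂ = (x₁ - x₂) / y₁ + x₂ * (y₂ - y₁) / (y₁ * y₂) := by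
    field_simp
    ring
  rw [h, ← norm_div, ← norm_mul, ← norm_mul, ← norm_div]
  exact IsUltrametricDist.norm_add_le_max _ _

namespace Matrix

variable {k : Type*} [NormedField k] {l m n ι : Type*} [Fintype l] [Fintype m] [Fintype n]
  [Fintype ι]

theorem norm_one_le [DecidableEq ι] : ‖(1 : Matrix ι ι k)‖ ≤ 1 :=
  (norm_le_iff zero_le_one).2 fun i j => by
    rw [one_apply]; split_ifs <;> simp

-- For the uniformity of the sup norm, which is not reducibly `Matrix.instUniformSpace`.
instance completeSpace [CompleteSpace k] :
    @CompleteSpace (Matrix m n k) PseudoMetricSpace.toUniformSpace :=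
  inferInstanceAs (CompleteSpace (m → n → k))

variable [IsUltrametricDist k]

theorem norm_mul_le_of_isUltrametricDist (A : Matrix l m k) (B : Matrix m n k) :
    ‖A * B‖ ≤ ‖A‖ * ‖B‖ :=
  (norm_le_iff (by positivity)).2 fun i j =>
    IsUltrametricDist.norm_sum_le_of_forall_le_of_nonneg (by positivity) fun r _ => by
      rw [norm_mul]
      exact mul_le_mul (norm_entry_le_entrywise_sup_norm A) (norm_entry_le_entrywise_sup_norm B)
        (norm_nonneg _) (norm_nonneg _)

instance isUltrametricDist : IsUltrametricDist (Matrix m n k) :=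
  inferInstanceAs (IsUltrametricDist (m → n → k))

/-- Not an instance: `Matrix` carries several natural norms. -/
abbrev ultrametricNormedRing [DecidableEq ι] : NormedRing (Matrix ι ι k) :=
  { Matrix.normedAddCommGroup, Matrix.instRing with
    norm_mul_le := norm_mul_le_of_isUltrametricDist }

end Matrix

section Perturbation

variable {k ι : Type*} [NormedField k] [Fintype ι] [DecidableEq ι] (a : ι → k) (E : Matrix ι ι k)

def perturbedEigenvalues (u : Matrix ι ι k) (j : ι) : k := a j + (E * (1 + u)) j j

def correctionMap (u : Matrix ι ι k) : Matrix ι ι k :=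
  of fun i j => if i = j then 0 else (E * (1 + u)) i j / (perturbedEigenvalues a E u j - a i)

variable {a E}

theorem diagonal_add_mul_eq_mul_diagonal {u : Matrix ι ι k} (hu : IsFixedPt (correctionMap a E) u)
    (hden : ∀ i j, i ≠ j → perturbedEigenvalues a E u j - a i ≠ 0) :
    (diagonal a + E) * (1 + u) = (1 + u) * diagonal (perturbedEigenvalues a E u) := by
  ext i j
  have hij := congrFun (congrFun hu i) j
  simp only [correctionMap, of_apply] at hij
  rw [Matrix.add_mul, Matrix.add_apply, diagonal_mul, mul_diagonal, Matrix.add_apply, one_apply]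
  split_ifs at hij ⊢ with h
  · subst h
    rw [← hij, perturbedEigenvalues]
    ring
  · rw [← hij]
    field_simp [hden i j h]
    ring

variable [IsUltrametricDist k]

theorem norm_mul_one_add_le {u : Matrix ι ι k} (hu : ‖u‖ ≤ 1) : ‖E * (1 + u)‖ ≤ ‖E‖ := calc
  ‖E * (1 + u)‖ ≤ ‖E‖ * ‖1 + u‖ := norm_mul_le_of_isUltrametricDist _ _
  _ ≤ ‖E‖ * 1 := by
    gcongr
    exact (IsUltrametricDist.norm_add_le_max _ _).trans (max_le norm_one_le hu)
  _ = ‖E‖ := mul_one _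

theorem norm_mul_one_add_sub_le (u v : Matrix ι ι k) :
    ‖E * (1 + u) - E * (1 + v)‖ ≤ ‖E‖ * ‖u - v‖ := by
  rw [← Matrix.mul_sub, add_sub_add_left_eq_sub]
  exact norm_mul_le_of_isUltrametricDist _ _

theorem norm_perturbedEigenvalues_sub_le {u : Matrix ι ι k} (hu : ‖u‖ ≤ 1) (j : ι) :
    ‖perturbedEigenvalues a E u j - a j‖ ≤ ‖E‖ := by
  rw [perturbedEigenvalues, add_sub_cancel_left]
  exact (norm_entry_le_entrywise_sup_norm _).trans (norm_mul_one_add_le hu)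

theorem norm_perturbedEigenvalues_sub_eq {u : Matrix ι ι k} (hu : ‖u‖ ≤ 1) {i j : ι}
    (hE : ‖E‖ < ‖a j - a i‖) : ‖perturbedEigenvalues a E u j - a i‖ = ‖a j - a i‖ := by
  have hsmall := (norm_perturbedEigenvalues_sub_le (a := a) hu j).trans_lt hE
  rw [← sub_add_sub_cancel _ (a j), add_comm,
    IsUltrametricDist.norm_add_eq_max_of_norm_ne_norm hsmall.ne', max_eq_left hsmall.le]

variable {r : ℝ}

theorem lt_norm_perturbedEigenvalues_sub (hsep : ∀ i j, i ≠ j → r < ‖a i - a j‖) (hE : ‖E‖ < r)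
    {u : Matrix ι ι k} (hu : ‖u‖ ≤ 1) {i j : ι} (hij : i ≠ j) :
    r < ‖perturbedEigenvalues a E u j - a i‖ := by
  have hji := hsep j i hij.symm
  rwa [norm_perturbedEigenvalues_sub_eq hu (hE.trans hji)]

theorem norm_correctionMap_le (hr : 0 < r) (hsep : ∀ i j, i ≠ j → r < ‖a i - a j‖)
    (hE : ‖E‖ < r) {u : Matrix ι ι k} (hu : ‖u‖ ≤ 1) : ‖correctionMap a E u‖ ≤ ‖E‖ / r := by
  refine (norm_le_iff (by positivity)).2 fun i j => ?_
  simp only [correctionMap, of_apply]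
  split_ifs with hij
  · rw [norm_zero]; positivity
  · rw [norm_div]
    exact div_le_div₀ (norm_nonneg _)
      ((norm_entry_le_entrywise_sup_norm _).trans (norm_mul_one_add_le hu)) hr
      (lt_norm_perturbedEigenvalues_sub hsep hE hu hij).le

theorem norm_correctionMap_sub_le (hr : 0 < r) (hsep : ∀ i j, i ≠ j → r < ‖a i - a j‖)
    (hE : ‖E‖ < r) {u v : Matrix ι ι k} (hu : ‖u‖ ≤ 1) (hv : ‖v‖ ≤ 1) :
    ‖correctionMap a E u - correctionMap a E v‖ ≤ ‖E‖ / r * ‖u - v‖ := by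
  refine (norm_le_iff (by positivity)).2 fun i j => ?_
  simp only [Matrix.sub_apply, correctionMap, of_apply]
  split_ifs with hij
  · rw [sub_self, norm_zero]; positivity
  have hdu := lt_norm_perturbedEigenvalues_sub hsep hE hu hij
  have hdv := lt_norm_perturbedEigenvalues_sub hsep hE hv hij
  have hentry : ∀ i j, ‖(E * (1 + u)) i j - (E * (1 + v)) i j‖ ≤ ‖E‖ * ‖u - v‖ := fun i j =>
    (norm_entry_le_entrywise_sup_norm (E * (1 + u) - E * (1 + v))).trans
      (norm_mul_one_add_sub_le u v)
  have hden : ‖perturbedEigenvalues a E v j - a i - (perturbedEigenvalues a E u j - a i)‖ ≤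
      ‖E‖ * ‖u - v‖ := by
    rw [sub_sub_sub_cancel_right, perturbedEigenvalues, perturbedEigenvalues,
      add_sub_add_left_eq_sub, norm_sub_rev]
    exact hentry j j
  have hnum : ‖(E * (1 + v)) i j‖ ≤ ‖E‖ :=
    (norm_entry_le_entrywise_sup_norm _).trans (norm_mul_one_add_le hv)
  refine (IsUltrametricDist.norm_div_sub_div_le_max (norm_pos_iff.1 (hr.trans hdu))
    (norm_pos_iff.1 (hr.trans hdv))).trans (max_le ?_ ?_)
  · calc _ ≤ ‖E‖ * ‖u - v‖ / r := div_le_div₀ (by positivity) (hentry i j) hr hdu.le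
      _ = ‖E‖ / r * ‖u - v‖ := by ring
  · have hq : ‖E‖ / r ≤ 1 := (div_le_one hr).2 hE.le
    calc _ ≤ ‖E‖ * (‖E‖ * ‖u - v‖) / (r * r) :=
          div_le_div₀ (by positivity) (mul_le_mul hnum hden (norm_nonneg _) (norm_nonneg _))
            (by positivity) (mul_le_mul hdu.le hdv.le hr.le (norm_nonneg _))
      _ = ‖E‖ / r * (‖E‖ / r) * ‖u - v‖ := by ring
      _ ≤ ‖E‖ / r * 1 * ‖u - v‖ := by gcongr
      _ = ‖E‖ / r * ‖u - v‖ := by ring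

theorem exists_isFixedPt_correctionMap [CompleteSpace k] (hr : 0 < r)
    (hsep : ∀ i j, i ≠ j → r < ‖a i - a j‖) (hE : ‖E‖ < r) :
    ∃ u, ‖u‖ ≤ ‖E‖ / r ∧ IsFixedPt (correctionMap a E) u := by
  set ρ := ‖E‖ / r
  have hρ : ρ < 1 := (div_lt_one hr).2 hE
  have hball : ∀ u ∈ Metric.closedBall (0 : Matrix ι ι k) ρ, ‖u‖ ≤ 1 := fun u hu =>
    (mem_closedBall_zero_iff.1 hu).trans hρ.le
  have hmaps : MapsTo (correctionMap a E) (Metric.closedBall 0 ρ) (Metric.closedBall 0 ρ) :=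
    fun u hu => mem_closedBall_zero_iff.2 (norm_correctionMap_le hr hsep hE (hball u hu))
  have hlip : LipschitzOnWith ⟨ρ, by positivity⟩ (correctionMap a E) (Metric.closedBall 0 ρ) :=
    LipschitzOnWith.of_dist_le_mul fun u hu v hv => by
      rw [dist_eq_norm, dist_eq_norm]
      exact norm_correctionMap_sub_le hr hsep hE (hball u hu) (hball v hv)
  obtain ⟨u, hu, hfix, -⟩ := ContractingWith.exists_fixedPoint'
    Metric.isClosed_closedBall.isComplete hmaps ⟨hρ, hlip.mapsToRestrict hmaps⟩
    (Metric.mem_closedBall_self (by positivity)) (edist_ne_top _ _)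
  exact ⟨u, mem_closedBall_zero_iff.1 hu, hfix⟩

theorem exists_conj_diagonal_of_norm_lt [CompleteSpace k] {ε : ℝ} (hε : 0 < ε) (hε1 : ε ≤ 1)
    (hsep : ∀ i j, i ≠ j → 2 * ε < ‖a i - a j‖) (hE : ‖E‖ < ε ^ 2) :
    ∃ (w : (Matrix ι ι k)ˣ) (a' : ι → k),
      diagonal a + E = (w : Matrix ι ι k) * diagonal a' * ((w⁻¹ : (Matrix ι ι k)ˣ) : Matrix ι ι k) ∧
        ‖(w : Matrix ι ι k) - 1‖ < ε ∧ ‖((w⁻¹ : (Matrix ι ι k)ˣ) : Matrix ι ι k) - 1‖ < ε ∧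
        ∀ j, ‖a' j - a j‖ < ε := by
  let _ := ultrametricNormedRing (k := k) (ι := ι)
  have hEε : ‖E‖ < ε := hE.trans_le (by nlinarith)
  obtain ⟨u, hu, hfix⟩ := exists_isFixedPt_correctionMap (by positivity) hsep (by linarith)
  have hu : ‖u‖ < ε := hu.trans_lt ((div_lt_iff₀ (by positivity)).2 (by nlinarith))
  have hu1 : ‖u‖ ≤ 1 := by linarith
  let w := Units.oneSub (-u) (by rw [norm_neg]; linarith)
  have hw : (w : Matrix ι ι k) - 1 = u := by simp [w]
  refine ⟨w, perturbedEigenvalues a E u, ?_, hw ▸ hu,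
    (IsUltrametricDist.norm_units_inv_sub_one_le w (hw ▸ hu.trans_le hε1)).trans_lt (hw ▸ hu),
    fun j => (norm_perturbedEigenvalues_sub_le hu1 j).trans_lt hEε⟩
  rw [Units.eq_mul_inv_iff_mul_eq, eq_add_of_sub_eq' hw]
  exact diagonal_add_mul_eq_mul_diagonal hfix fun i j hij =>
    norm_pos_iff.1 ((by positivity : (0:ℝ) < 2 * ε).trans
      (lt_norm_perturbedEigenvalues_sub hsep (by linarith) hu1 hij))

end Perturbation

theorem stmt13_general {k : Type*} [NormedField k] [CompleteSpace k]
    (hna : IsNonarchimedean fun x : k => ‖x‖)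
    (n : ℕ) (hn : 2 ≤ n) (a : Fin n → k) (C : Matrix (Fin n) (Fin n) k)
    (hC : C = Matrix.diagonal a) (hdet : C.det = 1)
    (ε : ℝ) (hε0 : 0 < ε) (hε1 : ε < 1)
    (hεsep : ∀ i j : Fin n, i ≠ j → ε < (1/2) * ‖a i - a j‖)
    (θ : ℝ)
    (hθ : θ = min ((10:ℝ)⁻¹^2 * sInf {r : ℝ | ∃ i j : Fin n, i ≠ j ∧ r = ‖a i - a j‖})
        (ε ^ n * matSup C ^ ((1:ℤ) - 2 * (n:ℤ)^2 - (n:ℤ))))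
    (C' : (Matrix (Fin n) (Fin n) k)ˣ) (hC' : matSup ((C' : Matrix (Fin n) (Fin n) k) - C) < θ) :
    ∃ (w : (Matrix (Fin n) (Fin n) k)ˣ) (a' : Fin n → k),
      (C' : Matrix (Fin n) (Fin n) k) =
          (w : Matrix (Fin n) (Fin n) k) * Matrix.diagonal a' * ((w⁻¹ : _) : Matrix (Fin n) (Fin n) k) ∧
      matSup ((w : Matrix (Fin n) (Fin n) k) - 1) < ε ∧
      matSup (((w⁻¹ : _) : Matrix (Fin n) (Fin n) k) - 1) < ε ∧
      ∀ j : Fin n, ‖a' j - a j‖ < ε := by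
  have := IsUltrametricDist.isUltrametricDist_of_isNonarchimedean_norm hna
  have : Nonempty (Fin n) := ⟨⟨0, by omega⟩⟩
  have hC1 : 1 ≤ matSup C := by
    rw [matSup_eq_norm, hC, norm_diagonal]
    exact Pi.one_le_norm_of_prod_eq_one (by rwa [hC, det_diagonal] at hdet)
  have hθε : θ ≤ ε ^ 2 := calc
    θ ≤ ε ^ n * matSup C ^ ((1:ℤ) - 2 * (n:ℤ)^2 - (n:ℤ)) := hθ ▸ min_le_right _ _
    _ ≤ ε ^ n * 1 := by
      gcongr
      exact zpow_le_one_of_nonpos₀ hC1 (by nlinarith)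
    _ ≤ ε ^ 2 := by rw [mul_one]; exact pow_le_pow_of_le_one hε0.le hε1.le hn
  obtain ⟨w, a', hconj, hw, hwinv, ha'⟩ := exists_conj_diagonal_of_norm_lt hε0 hε1.le
    (fun i j hij => by linarith [hεsep i j hij])
    (by rw [← matSup_eq_norm]; exact hC'.trans_le hθε)
  refine ⟨w, a', ?_, by rwa [matSup_eq_norm], by rwa [matSup_eq_norm], ha'⟩
  rw [← hconj, ← hC, add_sub_cancel]

/-- perturbation of a diagonal matrix with distinct eigenvalues over a
nonarchimedean local field: any invertible matrix `C'` with `‖C − C'‖ < θ(n, ε, C)` is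
conjugate, by some `w` with `‖w^{±1} − I‖ < ε`, to a diagonal matrix whose entries are
`ε`-close to those of `C`. -/
theorem stmt13 {k : Type*} [NormedField k] [CompleteSpace k] [LocallyCompactSpace k]
    (hna : IsNonarchimedean fun x : k => ‖x‖) (hnt : ∃ x : k, 1 < ‖x‖)
    (n : ℕ) (hn : 2 ≤ n) (a : Fin n → k) (C : Matrix (Fin n) (Fin n) k)
    (hC : C = Matrix.diagonal a) (hdet : C.det = 1) (hinj : Function.Injective a)
    (ε : ℝ) (hε0 : 0 < ε) (hε1 : ε < 1)
    (hεsep : ∀ i j : Fin n, i ≠ j → ε < (1/2) * ‖a i - a j‖)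
    (θ : ℝ)
    (hθ : θ = min ((10:ℝ)⁻¹^2 * sInf {r : ℝ | ∃ i j : Fin n, i ≠ j ∧ r = ‖a i - a j‖})
        (ε ^ n * matSup C ^ ((1:ℤ) - 2 * (n:ℤ)^2 - (n:ℤ))))
    (C' : (Matrix (Fin n) (Fin n) k)ˣ) (hC' : matSup ((C' : Matrix (Fin n) (Fin n) k) - C) < θ) :
    ∃ (w : (Matrix (Fin n) (Fin n) k)ˣ) (a' : Fin n → k),
      (C' : Matrix (Fin n) (Fin n) k) =
          (w : Matrix (Fin n) (Fin n) k) * Matrix.diagonal a' * ((w⁻¹ : _) : Matrix (Fin n) (Fin n) k) ∧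
      matSup ((w : Matrix (Fin n) (Fin n) k) - 1) < ε ∧
      matSup (((w⁻¹ : _) : Matrix (Fin n) (Fin n) k) - 1) < ε ∧
      ∀ j : Fin n, ‖a' j - a j‖ < ε :=
  stmt13_general hna n hn a C hC hdet ε hε0 hε1 hεsep θ hθ C' hC'
end
end

section
/- Let k be either ℝ or ℂ equipped with the Euclidean norm on k^n and the Hermitian dot product u·v := Σ_i u_i·conj(v_i), or a field with a nonarchimedean absolute value equipped with the sup norm ‖(a_i)‖ = max_i |a_i| on k^n and the bilinear dot product u·v := Σ_i u_i·v_i. Let ω, v ∈ k^n be nonzero vectors. Then for every unit vector w proportional to ω (i.e. w = c·ω for some c ∈ k with ‖w‖ = 1), every unit vector u ∈ k^n with u·v = 0, and every ζ ∈ k with |ζ| = 1, one has ‖ζ·w − u‖ ≥ |ω·v| / (‖ω‖·‖v‖). Equivalently, the projective distance from [ω] to the projectivized hyperplane ℙ(v^⊥) is at least |ω·v|/(‖ω‖·‖v‖). -/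
noncomputable section

open scoped ComplexConjugate

/-- Sum bound for nonarchimedean norms. -/
lemma nonarch_sum_le {k : Type*} [NormedField k]
    (hna : IsNonarchimedean fun x : k => ‖x‖) {ι : Type*} (s : Finset ι)
    (g : ι → k) {B : ℝ} (hB : 0 ≤ B) (h : ∀ i ∈ s, ‖g i‖ ≤ B) :
    ‖∑ i ∈ s, g i‖ ≤ B := by
  classical
  induction s using Finset.cons_induction with
  | empty => simpa using hB
  | cons a s ha ih =>
    rw [Finset.sum_cons]
    refine le_trans (hna _ _) (max_le (h a (by simp)) (ih fun i hi => h i (by simp [hi])))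

/-- for `k` either `ℝ`/`ℂ` (Euclidean norm, Hermitian dot product) or a field
with a nonarchimedean absolute value (sup norm, bilinear dot product), and nonzero vectors
`ω, v ∈ k^n`: for every unit vector `w` proportional to `ω`, every unit vector `u` with
`u·v = 0`, and every `ζ` with `|ζ| = 1`, one has `‖ζ·w − u‖ ≥ |ω·v|/(‖ω‖·‖v‖)`. -/
theorem stmt18 {k : Type*} [NormedField k] [StarRing k] {n : ℕ}
    (N : (Fin n → k) → ℝ)
    (hcase :
      -- nonarchimedean case: sup norm, trivial star (bilinear dot product)
      ((IsNonarchimedean fun x : k => ‖x‖) ∧ (∀ x : k, star x = x) ∧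
        (∀ v : Fin n → k, N v = ⨆ i, ‖v i‖)) ∨
      -- Archimedean case: `k` is isometrically `ℝ` (trivial star) or `ℂ` (star = conj),
      -- Euclidean norm
      (((∃ e : k ≃+* ℝ, (∀ x : k, ‖e x‖ = ‖x‖) ∧ ∀ x : k, star x = x) ∨
        (∃ e : k ≃+* ℂ, (∀ x : k, ‖e x‖ = ‖x‖) ∧ ∀ x : k, e (star x) = conj (e x))) ∧
        (∀ v : Fin n → k, N v = Real.sqrt (∑ i, ‖v i‖ ^ 2)))) :
    ∀ ω v : Fin n → k, ω ≠ 0 → v ≠ 0 →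
      ∀ w : Fin n → k, (∃ c : k, w = c • ω) → N w = 1 →
        ∀ u : Fin n → k, (∑ i, u i * star (v i)) = 0 → N u = 1 →
          ∀ ζ : k, ‖ζ‖ = 1 →
            ‖∑ i, ω i * star (v i)‖ / (N ω * N v) ≤ N (ζ • w - u) := by
  -- norm of star
  have hstar : ∀ x : k, ‖star x‖ = ‖x‖ := by
    rcases hcase with ⟨_, hs, _⟩ | ⟨he, _⟩
    · intro x; rw [hs]
    · rcases he with ⟨e, hiso, hs⟩ | ⟨e, hiso, hs⟩
      · intro x; rw [hs]
      · intro x; rw [← hiso, hs, ← hiso x]; simp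
  -- nonnegativity
  have hN0 : ∀ x : Fin n → k, 0 ≤ N x := by
    rcases hcase with ⟨_, _, hN⟩ | ⟨_, hN⟩
    · intro x; rw [hN]; exact Real.iSup_nonneg fun i => norm_nonneg _
    · intro x; rw [hN]; exact Real.sqrt_nonneg _
  -- homogeneity
  have hNh : ∀ (c : k) (x : Fin n → k), N (c • x) = ‖c‖ * N x := by
    rcases hcase with ⟨_, _, hN⟩ | ⟨_, hN⟩
    · intro c x
      simp only [hN, Pi.smul_apply, smul_eq_mul, norm_mul]
      rw [Real.mul_iSup_of_nonneg (norm_nonneg c)]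
    · intro c x
      simp only [hN, Pi.smul_apply, smul_eq_mul, norm_mul, mul_pow]
      rw [← Finset.mul_sum, Real.sqrt_mul (by positivity), Real.sqrt_sq (norm_nonneg c)]
  -- coordinate bound
  have hcoord : ∀ (x : Fin n → k) (i : Fin n), ‖x i‖ ≤ N x := by
    rcases hcase with ⟨_, _, hN⟩ | ⟨_, hN⟩
    · intro x i; rw [hN]
      exact le_ciSup (f := fun j => ‖x j‖) (Set.Finite.bddAbove (Set.finite_range _)) i
    · intro x i; rw [hN]
      rw [show ‖x i‖ = Real.sqrt (‖x i‖ ^ 2) from (Real.sqrt_sq (norm_nonneg _)).symm]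
      exact Real.sqrt_le_sqrt
        (Finset.single_le_sum (f := fun j => ‖x j‖ ^ 2) (fun j _ => by positivity)
          (Finset.mem_univ i))
  -- positivity
  have hNpos : ∀ x : Fin n → k, x ≠ 0 → 0 < N x := by
    intro x hx
    obtain ⟨i, hi⟩ := Function.ne_iff.mp hx
    exact lt_of_lt_of_le (norm_pos_iff.mpr hi) (hcoord x i)
  intro ω v hω hv w hw hw1 u hu hu1 ζ hζ
  obtain ⟨c, rfl⟩ := hw
  have hNω := hNpos ω hω
  have hNv := hNpos v hv
  -- Cauchy-Schwarz / ultrametric bound on the dot product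
  have hCS : ∀ x y : Fin n → k, ‖∑ i, x i * star (y i)‖ ≤ N x * N y := by
    rcases hcase with ⟨hna, _, _⟩ | ⟨_, hN⟩
    · intro x y
      refine nonarch_sum_le hna _ _ (mul_nonneg (hN0 x) (hN0 y)) fun i _ => ?_
      rw [norm_mul, hstar]
      exact mul_le_mul (hcoord x i) (hcoord y i) (norm_nonneg _) (hN0 x)
    · intro x y
      calc ‖∑ i, x i * star (y i)‖ ≤ ∑ i, ‖x i * star (y i)‖ := norm_sum_le _ _
        _ = ∑ i, ‖x i‖ * ‖y i‖ := by simp [norm_mul, hstar]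
        _ ≤ Real.sqrt (∑ i, ‖x i‖ ^ 2) * Real.sqrt (∑ i, ‖y i‖ ^ 2) :=
          Real.sum_mul_le_sqrt_mul_sqrt _ _ _
        _ = N x * N y := by rw [hN, hN]
  -- ‖c‖ * N ω = 1
  have hc : ‖c‖ * N ω = 1 := by rw [← hNh]; exact hw1
  -- compute the dot product of ζ • (c • ω) - u with v
  have hdot : (∑ i, (ζ • c • ω - u) i * star (v i)) =
      ζ * c * ∑ i, ω i * star (v i) := by
    rw [Finset.mul_sum]
    rw [show (∑ i, (ζ • c • ω - u) i * star (v i)) =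
        (∑ i, (ζ * (c * ω i) * star (v i) - u i * star (v i))) from by
      refine Finset.sum_congr rfl fun i _ => ?_
      simp [sub_mul]]
    rw [Finset.sum_sub_distrib, hu, sub_zero]
    exact Finset.sum_congr rfl fun i _ => by ring
  have hkey : ‖c‖ * ‖∑ i, ω i * star (v i)‖ ≤ N (ζ • c • ω - u) * N v := by
    calc ‖c‖ * ‖∑ i, ω i * star (v i)‖
        = ‖∑ i, (ζ • c • ω - u) i * star (v i)‖ := by
          rw [hdot, norm_mul, norm_mul, hζ, one_mul]
      _ ≤ N (ζ • c • ω - u) * N v := hCS _ _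
  rw [div_le_iff₀ (by positivity)]
  have : ‖∑ i, ω i * star (v i)‖ = (‖c‖ * N ω) * ‖∑ i, ω i * star (v i)‖ := by
    rw [hc, one_mul]
  rw [this]
  calc (‖c‖ * N ω) * ‖∑ i, ω i * star (v i)‖
      = (‖c‖ * ‖∑ i, ω i * star (v i)‖) * N ω := by ring
    _ ≤ (N (ζ • c • ω - u) * N v) * N ω := by
        exact mul_le_mul_of_nonneg_right hkey (le_of_lt hNω)
    _ = N (ζ • c • ω - u) * (N ω * N v) := by ring
end
end
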